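/- Validity of the first tightening inequality (A.1): Let 0 ≤ P_min ≤ P_max, R ≥ 0, R̄ ≥ 0 be real parameters. Let u₀, u₁ ∈ {0,1}, y ∈ ℝ with 0 ≤ y, y ≥ u₁ − u₀, y ≤ u₁, y ≤ 1 − u₀, and let p₀, p₁ ∈ ℝ satisfy P_min·u_s ≤ p_s ≤ P_max·u_s for s ∈ {0,1}, p₁ − p₀ ≤ R·u₀ + R̄·(1 − u₀), and p₀ − p₁ ≤ R·u₁ + R̄·(1 − u₁). Then p₀ ≤ R̄·u₀ + (P_max − R̄)·(u₁ − y). -/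

import Mathlib

/-! For binary statuses the startup constraints pin down `y = u₁ (1 - u₀)`, so the right-hand
side of (A.1) is `0` if the unit is off in the first period, `P_max` if it stays on, and `R̄` if it
shuts down. In the last case the unit produces nothing in the second period, so the ramp-down
limit caps `p₀` by the shutdown ramp `R̄`. -/

theorem startup_eq_of_binary {u0 u1 y : ℝ} (hu0 : u0 = 0 ∨ u0 = 1) (hu1 : u1 = 0 ∨ u1 = 1)
    (hy_nonneg : 0 ≤ y) (hy_trans : u1 - u0 ≤ y) (hy_up : y ≤ u1) (hy_down : y ≤ 1 - u0) :
    y = u1 * (1 - u0) := by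
  rcases hu0 with rfl | rfl <;> rcases hu1 with rfl | rfl <;> linarith

theorem tightening_A1_general
    (Pmax R Rb u0 u1 y p0 p1 : ℝ)
    (hu0 : u0 = 0 ∨ u0 = 1) (hu1 : u1 = 0 ∨ u1 = 1)
    (hy_nonneg : 0 ≤ y) (hy_trans : u1 - u0 ≤ y)
    (hy_up : y ≤ u1) (hy_down : y ≤ 1 - u0)
    (hp0_ub : p0 ≤ Pmax * u0)
    (hp1_ub : p1 ≤ Pmax * u1)
    (hramp_dn : p0 - p1 ≤ R * u1 + Rb * (1 - u1)) :
    p0 ≤ Rb * u0 + (Pmax - Rb) * (u1 - y) := by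
  rw [startup_eq_of_binary hu0 hu1 hy_nonneg hy_trans hy_up hy_down]
  rcases hu0 with rfl | rfl
  · simpa using hp0_ub
  rcases hu1 with rfl | rfl
  · have hp1_nonpos : p1 ≤ 0 := by simpa using hp1_ub
    linarith
  · simpa using hp0_ub

/-- validity of tightening inequality (A.1). -/
theorem tightening_A1
    (Pmin Pmax R Rb u0 u1 y p0 p1 : ℝ)
    (hPmin : 0 ≤ Pmin) (hPP : Pmin ≤ Pmax) (hR : 0 ≤ R) (hRb : 0 ≤ Rb)
    (hu0 : u0 = 0 ∨ u0 = 1) (hu1 : u1 = 0 ∨ u1 = 1)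
    (hy_nonneg : 0 ≤ y) (hy_trans : u1 - u0 ≤ y)
    (hy_up : y ≤ u1) (hy_down : y ≤ 1 - u0)
    (hp0_lb : Pmin * u0 ≤ p0) (hp0_ub : p0 ≤ Pmax * u0)
    (hp1_lb : Pmin * u1 ≤ p1) (hp1_ub : p1 ≤ Pmax * u1)
    (hramp_up : p1 - p0 ≤ R * u0 + Rb * (1 - u0))
    (hramp_dn : p0 - p1 ≤ R * u1 + Rb * (1 - u1)) :
    p0 ≤ Rb * u0 + (Pmax - Rb) * (u1 - y) :=
  tightening_A1_general Pmax R Rb u0 u1 y p0 p1 hu0 hu1 hy_nonneg hy_trans hy_up hy_down hp0_ub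
    hp1_ub hramp_dn
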